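/- (Theorem 1, inclusion of minimizer sets.) Let z^n be a minimizer over y^n ∈ 𝒴^n of the cost H(m(y^n)) + α·d_n(x^n,y^n), set m* = m(z^n), assume every entry of m* is strictly positive, and define λ_{β,b} = log((Σ_{β'∈𝒴} m*_{β',b})/m*_{β,b}). Then every minimizer w^n over y^n ∈ 𝒴^n of the linearized cost Σ_{β∈𝒴} Σ_{b∈𝒴^k} λ_{β,b}·m_{β,b}(y^n) + α·d_n(x^n,y^n) is also a minimizer of the original cost H(m(y^n)) + α·d_n(x^n,y^n). -/

import Mathlib

/-!
The conditional entropy is a minimum of linear functionals: by Gibbs' inequality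
`H(m) ≤ ∑ λ_{β,b}(q) m_{β,b}` for every positive matrix `q`, with equality at `m = q`.
Hence, writing `L` for the linearized cost at `q = m(z^n)`, a minimizer `w` of `L` satisfies
`𝓔(w) ≤ L(w) ≤ L(z) = 𝓔(z) ≤ 𝓔(y)`.
-/

/-- The entropy `𝓗(v)` of the (unnormalized) nonnegative vector `v`:
`𝓗(v) = ∑ i, (v i / ‖v‖₁) * log (‖v‖₁ / v i)` if `v ≠ 0`, and `𝓗(0) = 0`,
where for a vector with nonnegative components `‖v‖₁ = ∑ i, v i`. -/
noncomputable def vecEnt {ι : Type*} [Fintype ι] (v : ι → ℝ) : ℝ :=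
  @ite ℝ (v = 0) (Classical.propDecidable _) 0
    (∑ i, (v i / ∑ j, v j) * Real.log ((∑ j, v j) / v i))

/-- Conditional empirical entropy of a `|𝒴| × |𝒴|^k` matrix `m` with nonnegative entries:
`H(m) = ∑_{b ∈ 𝒴^k} (∑_{β ∈ 𝒴} m_{β,b}) ⬝ 𝓗(m_{·,b})`. -/
noncomputable def condEnt {Y : Type*} [Fintype Y] {k : ℕ} (m : Y → (Fin k → Y) → ℝ) : ℝ :=
  ∑ b : Fin k → Y, (∑ β : Y, m β b) * vecEnt (fun β => m β b)

/-- The `(k+1)`-th order empirical count matrix of a cyclic sequence `y` of length `n`: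
`m_{β,b}(y^n) = (1/n)·|{1 ≤ i ≤ n : (y_{i−k},…,y_{i−1}) = b and y_i = β}|`,
with indices taken cyclically (modulo `n`). -/
noncomputable def empM {Y : Type*} [Fintype Y] [DecidableEq Y] (n k : ℕ) [NeZero n]
    (y : ZMod n → Y) (β : Y) (b : Fin k → Y) : ℝ :=
  ((Finset.univ.filter (fun i : ZMod n =>
      y i = β ∧ ∀ j : Fin k, y (i - (k : ZMod n) + ((j : ℕ) : ZMod n)) = b j)).card : ℝ) / n

/-- Average per-letter distortion `d_n(x^n, y^n) = (1/n) ∑_{i=1}^n d(x_i, y_i)`. -/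
noncomputable def distn {X Y : Type*} (n : ℕ) [NeZero n] (d : X → Y → ℝ)
    (x : ZMod n → X) (y : ZMod n → Y) : ℝ :=
  (∑ i : ZMod n, d (x i) (y i)) / n

/-- The energy (cost of problem (P1)): `𝓔(y^n) = H(m(y^n)) + α·d_n(x^n, y^n)`. -/
noncomputable def energy {X Y : Type*} [Fintype Y] [DecidableEq Y] (n k : ℕ) [NeZero n]
    (x : ZMod n → X) (α : ℝ) (d : X → Y → ℝ) (y : ZMod n → Y) : ℝ :=
  condEnt (fun β b => empM n k y β b) + α * distn n d x y

/-- The linearized cost (problem (P2)):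
`∑_{β,b} λ_{β,b}·m_{β,b}(y^n) + α·d_n(x^n, y^n)`. -/
noncomputable def linCost {X Y : Type*} [Fintype Y] [DecidableEq Y] (n k : ℕ) [NeZero n]
    (x : ZMod n → X) (α : ℝ) (d : X → Y → ℝ) (lam : Y → (Fin k → Y) → ℝ)
    (y : ZMod n → Y) : ℝ :=
  (∑ β : Y, ∑ b : Fin k → Y, lam β b * empM n k y β b) + α * distn n d x y

/-- The coefficient matrix `Λ(q)` of a positive matrix `q`:
`λ_{β,b} = log((∑_{β'} q_{β',b}) / q_{β,b})`. -/
noncomputable def lamOf {Y : Type*} [Fintype Y] {k : ℕ}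
    (q : Y → (Fin k → Y) → ℝ) (β : Y) (b : Fin k → Y) : ℝ :=
  Real.log ((∑ β' : Y, q β' b) / q β b)

open Finset Real

lemma mul_log_div_le_sub {m c : ℝ} (hm : 0 < m) (hc : 0 < c) : m * log (c / m) ≤ c - m :=
  calc m * log (c / m) ≤ m * (c / m - 1) := by
        gcongr; exact log_le_sub_one_of_pos (div_pos hc hm)
    _ = c - m := by field_simp

section Gibbs

variable {ι : Type*} [Fintype ι]

lemma sum_mul_vecEnt (v : ι → ℝ) :
    (∑ i, v i) * vecEnt v = ∑ i, v i * log ((∑ j, v j) / v i) := by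
  by_cases hv : v = 0
  · simp [vecEnt, hv]
  rw [vecEnt, if_neg hv, mul_sum]
  refine sum_congr rfl fun i _ => ?_
  by_cases hS : ∑ j, v j = 0
  · simp [hS]
  · field_simp

/-- Gibbs' inequality. -/
theorem sum_mul_log_sum_div_le_sum_mul_log_sum_div (m q : ι → ℝ) (hm : ∀ i, 0 ≤ m i)
    (hq : ∀ i, 0 < q i) :
    ∑ i, m i * log ((∑ j, m j) / m i) ≤ ∑ i, m i * log ((∑ j, q j) / q i) := by
  rcases isEmpty_or_nonempty ι with hι | hι
  · simp
  set S := ∑ j, m j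
  set T := ∑ j, q j
  have hT : 0 < T := sum_pos (fun i _ => hq i) univ_nonempty
  have hterm : ∀ i, m i * log (S / m i) - m i * log (T / q i) ≤ S / T * q i - m i := by
    intro i
    rcases (hm i).eq_or_lt with hmi | hmi
    · simp only [← hmi, zero_mul, sub_zero]
      exact mul_nonneg (div_nonneg (sum_nonneg fun j _ => hm j) hT.le) (hq i).le
    have hqi := hq i
    have hS : 0 < S := hmi.trans_le (single_le_sum (fun j _ => hm j) (mem_univ i))
    calc m i * log (S / m i) - m i * log (T / q i)
        = m i * log (S / T * q i / m i) := by
          rw [← mul_sub, ← log_div (by positivity) (by positivity)]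
          congr 2
          field_simp
      _ ≤ S / T * q i - m i := mul_log_div_le_sub hmi (by positivity)
  have hsum : ∑ i, (S / T * q i - m i) = 0 := by
    rw [sum_sub_distrib, ← mul_sum, div_mul_cancel₀ S hT.ne', sub_self]
  have hdiff := sum_le_sum fun i (_ : i ∈ univ) => hterm i
  rwa [sum_sub_distrib, hsum, sub_nonpos] at hdiff

end Gibbs

section CondEnt

variable {Y : Type*} [Fintype Y] {k : ℕ}

lemma condEnt_eq_sum_lamOf_mul (q : Y → (Fin k → Y) → ℝ) :
    condEnt q = ∑ β, ∑ b, lamOf q β b * q β b := by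
  rw [sum_comm, condEnt]
  refine sum_congr rfl fun b _ => ?_
  rw [sum_mul_vecEnt (fun β => q β b)]
  exact sum_congr rfl fun β _ => mul_comm _ _

lemma condEnt_le_sum_lamOf_mul (m q : Y → (Fin k → Y) → ℝ) (hm : ∀ β b, 0 ≤ m β b)
    (hq : ∀ β b, 0 < q β b) :
    condEnt m ≤ ∑ β, ∑ b, lamOf q β b * m β b := by
  rw [sum_comm, condEnt]
  refine sum_le_sum fun b _ => ?_
  rw [sum_mul_vecEnt (fun β => m β b)]
  refine (sum_mul_log_sum_div_le_sum_mul_log_sum_div _ _ (fun β => hm β b)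
    (fun β => hq β b)).trans_eq (sum_congr rfl fun β _ => mul_comm _ _)

end CondEnt

section Costs

variable {X Y : Type*} [Fintype Y] [DecidableEq Y] {n : ℕ} [NeZero n] (k : ℕ)
  (x : ZMod n → X) (α : ℝ) (d : X → Y → ℝ)

lemma empM_nonneg (y : ZMod n → Y) (β : Y) (b : Fin k → Y) : 0 ≤ empM n k y β b := by
  unfold empM; positivity

lemma energy_le_linCost_lamOf {q : Y → (Fin k → Y) → ℝ} (hq : ∀ β b, 0 < q β b)
    (y : ZMod n → Y) : energy n k x α d y ≤ linCost n k x α d (lamOf q) y :=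
  add_le_add_left (condEnt_le_sum_lamOf_mul _ q (empM_nonneg k y) hq) _

lemma linCost_lamOf_empM_self (z : ZMod n → Y) :
    linCost n k x α d (lamOf (empM n k z)) z = energy n k x α d z := by
  rw [energy, linCost, condEnt_eq_sum_lamOf_mul]

end Costs

theorem stmt8_general {X Y : Type*} [Fintype Y] [DecidableEq Y]
    (n k : ℕ) [NeZero n]
    (x : ZMod n → X) (α : ℝ)
    (d : X → Y → ℝ)
    (z : ZMod n → Y)
    (hz : ∀ y : ZMod n → Y, energy n k x α d z ≤ energy n k x α d y)
    (hpos : ∀ (β : Y) (b : Fin k → Y), 0 < empM n k z β b)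
    (w : ZMod n → Y)
    (hw : ∀ y : ZMod n → Y,
      linCost n k x α d (lamOf (empM n k z)) w ≤ linCost n k x α d (lamOf (empM n k z)) y) :
    ∀ y : ZMod n → Y, energy n k x α d w ≤ energy n k x α d y := fun y =>
  calc energy n k x α d w ≤ linCost n k x α d (lamOf (empM n k z)) w :=
        energy_le_linCost_lamOf k x α d hpos w
    _ ≤ linCost n k x α d (lamOf (empM n k z)) z := hw z
    _ = energy n k x α d z := linCost_lamOf_empM_self k x α d z
    _ ≤ energy n k x α d y := hz y

/-- Theorem 1, inclusion of minimizer sets: with `z^n` a minimizer of the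
original cost, `m* = m(z^n)` strictly positive and `λ` the tangent coefficients at `m*`,
every minimizer of the linearized cost is also a minimizer of the original cost. -/
theorem stmt8 {X Y : Type*} [Fintype X] [Fintype Y] [Nonempty X] [Nonempty Y] [DecidableEq Y]
    (n k : ℕ) [NeZero n] (hk : 0 < k)
    (x : ZMod n → X) (α : ℝ) (hα : 0 ≤ α)
    (d : X → Y → ℝ) (hd : ∀ a b, 0 ≤ d a b)
    (z : ZMod n → Y)
    (hz : ∀ y : ZMod n → Y, energy n k x α d z ≤ energy n k x α d y)
    (hpos : ∀ (β : Y) (b : Fin k → Y), 0 < empM n k z β b)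
    (w : ZMod n → Y)
    (hw : ∀ y : ZMod n → Y,
      linCost n k x α d (lamOf (empM n k z)) w ≤ linCost n k x α d (lamOf (empM n k z)) y) :
    ∀ y : ZMod n → Y, energy n k x α d w ≤ energy n k x α d y :=
  stmt8_general n k x α d z hz hpos w hw
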